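/- arXiv:1403.0713 — 2 statements merged into one kernel-verified Lean document; each statement's English description precedes it below -/
import Mathlib

section
/- The four polynomials f₂ = x₁²+x₂²+x₃²+x₄², f₄ = x₁⁴+x₂⁴+x₃⁴+x₄⁴, g₄ = x₁x₂x₃x₄, and f₆ = x₁⁶+x₂⁶+x₃⁶+x₄⁶ in ℂ[x₁,x₂,x₃,x₄] are algebraically independent over ℂ. -/
/-!
Each `xᵢ` is a root of `6 ∏ⱼ (T² - xⱼ²)`, a nonzero polynomial whose coefficients are, by Newton's
identities for the squares `xⱼ²`, polynomials in `f₂, f₄, f₆` and `g₄² = ∏ⱼ xⱼ²`. Hence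
`ℂ[x₁,x₂,x₃,x₄]` is algebraic over the subalgebra generated by `f₂, f₄, g₄, f₆`, and four elements
over which a ring of transcendence degree four is algebraic form a transcendence basis.
-/

open MvPolynomial

/-- The `d`-th power sum `x₁^d + x₂^d + x₃^d + x₄^d`. -/
noncomputable def f (d : ℕ) : MvPolynomial (Fin 4) ℂ := ∑ i : Fin 4, X i ^ d

/-- The product `g₄ = x₁x₂x₃x₄`. -/
noncomputable def g₄ : MvPolynomial (Fin 4) ℂ := ∏ i : Fin 4, X i

open Algebra Set Cardinal in
theorem MvPolynomial.algebraicIndependent_of_isAlgebraic_X {σ R : Type*} [Finite σ]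
    [CommRing R] [IsDomain R] (v : σ → MvPolynomial σ R)
    (hX : ∀ i, IsAlgebraic (adjoin R (range v)) (X i : MvPolynomial σ R)) :
    AlgebraicIndependent R v := by
  have : Algebra.IsAlgebraic (adjoin R (range v)) (MvPolynomial σ R) := by
    refine ⟨fun p => IsAlgebraic.adjoin_of_forall_isAlgebraic (s := range X)
      (fun _ ⟨⟨i, hi⟩, _⟩ => hi ▸ hX i) ?_⟩
    rw [adjoin_range_X]
    exact isAlgebraic_algebraMap (⟨p, trivial⟩ : (⊤ : Subalgebra R (MvPolynomial σ R)))
  refine (Algebra.IsAlgebraic.isTranscendenceBasis_of_lift_le_trdeg_of_finite R v ?_).1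
  rw [MvPolynomial.trdeg_of_isDomain, lift_lift]

-- The left-hand side is `6 ∏ⱼ (xᵢ² - xⱼ²)`.
theorem X_pow_eight_relation (i : Fin 4) :
    6 * X i ^ 8 - 6 * f 2 * X i ^ 6 + 3 * (f 2 ^ 2 - f 4) * X i ^ 4
      - (f 2 ^ 3 - 3 * f 2 * f 4 + 2 * f 6) * X i ^ 2 + 6 * g₄ ^ 2 = 0 := by
  simp only [f, g₄, Fin.sum_univ_four, Fin.prod_univ_four]
  fin_cases i <;> simp only [Fin.zero_eta, Fin.mk_one, Fin.reduceFinMk] <;> ring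

open Algebra Set in
theorem isAlgebraic_X_adjoin_f_g₄ (i : Fin 4) :
    IsAlgebraic (adjoin ℂ (range ![f 2, f 4, g₄, f 6])) (X i : MvPolynomial (Fin 4) ℂ) := by
  set S := adjoin ℂ (range ![f 2, f 4, g₄, f 6])
  let s : Fin 4 → S := fun j => ⟨_, subset_adjoin (mem_range_self j)⟩
  let T : Polynomial S := Polynomial.X
  let c : S → Polynomial S := Polynomial.C
  refine ⟨c 6 * T ^ 8 - c (6 * s 0) * T ^ 6 + c (3 * (s 0 ^ 2 - s 1)) * T ^ 4
      - c (s 0 ^ 3 - 3 * s 0 * s 1 + 2 * s 3) * T ^ 2 + c (6 * s 2 ^ 2), ?_, ?_⟩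
  · intro h
    have h8 := congrArg (fun p => ((p.coeff 8 : S) : MvPolynomial (Fin 4) ℂ)) h
    simp only [T, c, Polynomial.coeff_add, Polynomial.coeff_sub, Polynomial.coeff_C_mul,
      Polynomial.coeff_X_pow, Polynomial.coeff_C] at h8
    norm_num at h8
  · simp only [T, c, s, map_add, map_sub, map_mul, map_pow, Polynomial.aeval_C,
      Polynomial.aeval_X, Subalgebra.algebraMap_apply, SubmonoidClass.mk_pow, Fin.isValue,
      Matrix.cons_val_zero, Matrix.cons_val_one, Matrix.cons_val]
    exact X_pow_eight_relation i

/-- The polynomials `f₂, f₄, g₄, f₆` in `ℂ[x₁,x₂,x₃,x₄]` are algebraically independent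
over `ℂ`. -/
theorem statement6 : AlgebraicIndependent ℂ ![f 2, f 4, g₄, f 6] :=
  algebraicIndependent_of_isAlgebraic_X _ isAlgebraic_X_adjoin_f_g₄
end

section
/- Let P : M₄(ℂ) → ℂ be a polynomial function of the 16 matrix entries such that P(gXgᵀ) = P(X) for every symmetric matrix X ∈ M₄(ℂ) (Xᵀ = X) and every g ∈ SO₄(ℂ). Then there exists a polynomial Q in four variables with complex coefficients such that P(X) = Q(tr X, tr X², tr X³, tr X⁴) for every symmetric X ∈ M₄(ℂ). In other words, the invariant ring of the action g·X = gXgᵀ of SO₄(ℂ) on symmetric 4×4 complex matrices is generated by tr X, tr X², tr X³ and tr X⁴. -/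
/-!
On symmetric matrices with distinct eigenvalues, `SO_n` acts with diagonal representatives
`X = g diag(λ) gᵀ`; conjugating by (sign-corrected) permutation matrices shows that `P` restricted
to diagonal matrices is a symmetric polynomial in `λ`, hence (characteristic zero) a polynomial
`Q` in the power sums `∑ λᵢᵏ = tr Xᵏ`. So `P X = Q(tr X, …, tr Xⁿ)` whenever the discriminant of
`X` is nonzero. That discriminant is a nonzero polynomial in the entries of a generic symmetric
matrix, so the polynomial identity holds on all symmetric matrices.
-/

open Matrix MvPolynomial

namespace SymmetricMatrixInvariants

theorem _root_.Multiset.exists_univ_val_map_eq {ι α : Type*} [Fintype ι] (m : Multiset α)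
    (h : Multiset.card m = Fintype.card ι) : ∃ f : ι → α, Finset.univ.val.map f = m := by
  let e : ι ≃ Fin m.toList.length := (Fintype.equivFin ι).trans (finCongr (by simp [h]))
  refine ⟨m.toList.get ∘ e, ?_⟩
  rw [← Multiset.map_map, Multiset.map_univ_val_equiv, Fin.univ_val_map, List.ofFn_get,
    Multiset.coe_toList]

section Polynomials

variable {σ τ R : Type*} [CommSemiring R]

theorem eval_aeval (x : τ → R) (f : σ → MvPolynomial τ R) (p : MvPolynomial σ R) :
    eval x (aeval f p) = eval (fun i => eval x (f i)) p := by
  simpa [aeval_eq_bind₁] using eval₂Hom_bind₁ (RingHom.id R) x f p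

theorem eval_trace_pow {ι : Type*} [Fintype ι] [DecidableEq ι] (x : τ → R)
    (N : Matrix ι ι (MvPolynomial τ R)) (k : ℕ) :
    eval x (N ^ k).trace = (N.map (eval x) ^ k).trace := by
  rw [AddMonoidHom.map_trace, Matrix.map_pow]

end Polynomials

section PowerSums

variable {σ K : Type*} [Fintype σ] [Field K] [CharZero K] {n : ℕ}

theorem _root_.MvPolynomial.esymm_mem_adjoin_psum (hn : Fintype.card σ ≤ n) (k : ℕ) :
    esymm σ K k ∈ Algebra.adjoin K (Set.range fun i : Fin n => psum σ K (i + 1)) := by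
  set A := Algebra.adjoin K (Set.range fun i : Fin n => psum σ K (i + 1))
  induction k using Nat.strong_induction_on with | _ k ih => ?_
  rcases Nat.eq_zero_or_pos k with rfl | hk0
  · rw [esymm_zero]; exact A.one_mem
  by_cases hkσ : Fintype.card σ < k
  · rw [esymm, Finset.powersetCard_eq_empty.mpr (by simpa using hkσ), Finset.sum_empty]
    exact A.zero_mem
  have hmul : (k : K) • esymm σ K k ∈ A := by
    rw [Nat.cast_smul_eq_nsmul, nsmul_eq_mul, mul_esymm_eq_sum]
    refine A.mul_mem (A.pow_mem (A.neg_mem A.one_mem) _) (A.sum_mem fun a ha => ?_)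
    rw [Finset.mem_filter, Finset.HasAntidiagonal.mem_antidiagonal] at ha
    refine A.mul_mem (A.mul_mem (A.pow_mem (A.neg_mem A.one_mem) _) (ih a.1 ha.2)) ?_
    exact Algebra.subset_adjoin ⟨⟨a.2 - 1, by omega⟩, by simp only; congr; omega⟩
  have hk : (k : K) ≠ 0 := Nat.cast_ne_zero.mpr hk0.ne'
  simpa [smul_smul, inv_mul_cancel₀ hk] using A.smul_mem hmul (k : K)⁻¹

theorem _root_.MvPolynomial.IsSymmetric.exists_aeval_psum_eq {p : MvPolynomial σ K}
    (hp : p.IsSymmetric) (hn : Fintype.card σ ≤ n) :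
    ∃ Q : MvPolynomial (Fin n) K, aeval (fun i : Fin n => psum σ K (i + 1)) Q = p := by
  obtain ⟨Qe, hQe⟩ := esymmAlgHom_surjective K hn ⟨p, hp⟩
  have hmem : p ∈ Algebra.adjoin K (Set.range fun i : Fin n => psum σ K (i + 1)) := by
    have hQe' : aeval (fun i : Fin n => esymm σ K (i + 1)) Qe = p := by
      rw [← esymmAlgHom_apply, hQe]
    rw [← hQe']
    refine Algebra.adjoin_le (s := Set.range fun i : Fin n => esymm σ K (i + 1))
      (Set.range_subset_iff.2 fun i => esymm_mem_adjoin_psum hn _) ?_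
    rw [Algebra.adjoin_range_eq_range_aeval]
    exact ⟨Qe, rfl⟩
  rwa [Algebra.adjoin_range_eq_range_aeval] at hmem

end PowerSums

section Matrices

variable {ι K : Type*} [Fintype ι] [Field K]

theorem dotProduct_eq_zero_of_mulVec_eq_smul {M : Matrix ι ι K} (hM : Mᵀ = M) {a b : K}
    {v w : ι → K} (hv : M *ᵥ v = a • v) (hw : M *ᵥ w = b • w) (hab : a ≠ b) : v ⬝ᵥ w = 0 := by
  have h : a * (v ⬝ᵥ w) = b * (v ⬝ᵥ w) := calc
    a * (v ⬝ᵥ w) = (v ᵥ* Mᵀ) ⬝ᵥ w := by rw [vecMul_transpose, hv, smul_dotProduct, smul_eq_mul]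
    _ = b * (v ⬝ᵥ w) := by rw [hM, ← dotProduct_mulVec, hw, dotProduct_smul, smul_eq_mul]
  exact (mul_eq_mul_right_iff.mp h).resolve_left hab

variable [DecidableEq ι]

theorem trace_pow_mul_mul_transpose {R : Type*} [CommRing R] {g : Matrix ι ι R} (hg : gᵀ * g = 1)
    (A : Matrix ι ι R) (k : ℕ) : ((g * A * gᵀ) ^ k).trace = (A ^ k).trace := by
  have hconj : SemiconjBy g A (g * A * gᵀ) := by
    rw [SemiconjBy, mul_assoc, hg, mul_one]
  calc ((g * A * gᵀ) ^ k).trace = ((g * A * gᵀ) ^ k * g * gᵀ).trace := by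
        rw [mul_assoc _ g, mul_eq_one_comm.mp hg, mul_one]
    _ = (g * A ^ k * gᵀ).trace := by rw [← (hconj.pow_right k).eq]
    _ = (A ^ k).trace := by rw [trace_mul_cycle, hg, one_mul]

theorem exists_det_eq_one_conj_diagonal_eq {g : Matrix ι ι K} (hg : gᵀ * g = 1) :
    ∃ g' : Matrix ι ι K, g'ᵀ * g' = 1 ∧ g'.det = 1 ∧
      ∀ d : ι → K, g' * diagonal d * g'ᵀ = g * diagonal d * gᵀ := by
  by_cases hdet : g.det = 1
  · exact ⟨g, hg, hdet, fun _ => rfl⟩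
  have hdet' : g.det = -1 := by
    have h := congrArg det hg
    rw [det_mul, det_transpose, det_one] at h
    exact (mul_self_eq_one_iff.mp h).resolve_left hdet
  obtain ⟨i₀⟩ : Nonempty ι := by
    by_contra h
    rw [not_nonempty_iff] at h
    exact hdet det_isEmpty
  -- flipping the sign of one column fixes the determinant and commutes with every diagonal
  set s : ι → K := fun i => if i = i₀ then -1 else 1
  have hss : diagonal s * diagonal s = 1 := by
    rw [diagonal_mul_diagonal, ← diagonal_one]
    congr 1; funext i; simp only [s]; split_ifs <;> simp
  refine ⟨g * diagonal s, ?_, ?_, fun d => ?_⟩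
  · rw [transpose_mul, diagonal_transpose, mul_assoc, ← mul_assoc gᵀ, hg, one_mul, hss]
  · simp [det_mul, hdet', s, Finset.prod_ite_eq']
  · have hsds : diagonal s * diagonal d * diagonal s = diagonal d := by
      rw [diagonal_mul_diagonal, diagonal_mul_diagonal]
      congr 1; funext i; simp only [s]; split_ifs <;> simp
    rw [transpose_mul, diagonal_transpose]
    conv_rhs => rw [← hsds]
    simp only [mul_assoc]

theorem exists_det_eq_one_conj_diagonal_eq_comp (σ : Equiv.Perm ι) :
    ∃ g : Matrix ι ι K, gᵀ * g = 1 ∧ g.det = 1 ∧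
      ∀ d : ι → K, g * diagonal d * gᵀ = diagonal (d ∘ σ) := by
  obtain ⟨g, hg, hdet, hconj⟩ := exists_det_eq_one_conj_diagonal_eq (g := σ.permMatrix K)
    (by rw [transpose_permMatrix, ← permMatrix_mul, mul_inv_cancel, permMatrix_one])
  refine ⟨g, hg, hdet, fun d => ?_⟩
  rw [hconj]
  ext i j
  simp [Equiv.Perm.permMatrix, PEquiv.toMatrix_toPEquiv_mul, PEquiv.mul_toMatrix_toPEquiv,
    transpose_permMatrix, diagonal_apply, Equiv.Perm.inv_def]

theorem exists_orthogonal_eq_conj_diagonal_of_eigenvectors [IsAlgClosed K] {M : Matrix ι ι K}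
    (hM : Mᵀ = M) {lam : ι → K} (hlam : Function.Injective lam) {v : ι → ι → K}
    (hv0 : ∀ i, v i ≠ 0) (hv : ∀ i, M *ᵥ v i = lam i • v i) :
    ∃ g : Matrix ι ι K, gᵀ * g = 1 ∧ M = g * diagonal lam * gᵀ := by
  set V : Matrix ι ι K := (of v)ᵀ
  have hVV : Vᵀ * V = diagonal fun i => v i ⬝ᵥ v i := by
    ext i j
    rw [diagonal_apply]
    split_ifs with hij
    · subst hij; simp [V, mul_apply, dotProduct]
    · simpa [V, mul_apply, dotProduct] using
        dotProduct_eq_zero_of_mulVec_eq_smul hM (hv i) (hv j) (hlam.ne hij)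
  have hVunit : IsUnit (of v) := by
    rw [← linearIndependent_rows_iff_isUnit]
    exact Module.End.eigenvectors_linearIndependent' (toLin' M) lam hlam v
      fun i => ⟨by simpa [Module.End.mem_eigenspace_iff] using hv i, hv0 i⟩
  have hVdet : V.det ≠ 0 := by
    rw [det_transpose]; exact ((isUnit_iff_isUnit_det _).mp hVunit).ne_zero
  have hnorm : ∀ i, v i ⬝ᵥ v i ≠ 0 := by
    have h := congrArg det hVV
    rw [det_mul, det_transpose, det_diagonal] at h
    exact fun i => Finset.prod_ne_zero_iff.mp (h ▸ mul_ne_zero hVdet hVdet) i (Finset.mem_univ i)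
  -- normalise the eigenvectors by square roots of `vᵢ ⬝ᵥ vᵢ`, nonzero because `VᵀV` is invertible
  choose r hr using fun i => IsAlgClosed.exists_eq_mul_self (v i ⬝ᵥ v i)
  set g := V * diagonal fun i => (r i)⁻¹
  have hg : gᵀ * g = 1 := by
    have hr0 : ∀ i, r i ≠ 0 := fun i h => hnorm i (by rw [hr i, h, mul_zero])
    rw [transpose_mul, diagonal_transpose, mul_assoc, ← mul_assoc Vᵀ, hVV, diagonal_mul_diagonal,
      diagonal_mul_diagonal, ← diagonal_one]
    congr 1; funext i
    have := hr0 i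
    rw [hr i]; field_simp
  have hMV : M * V = V * diagonal lam := by
    ext k i
    rw [mul_diagonal]
    simpa [V, mul_apply, mulVec, dotProduct, mul_comm] using congrFun (hv i) k
  have hMg : M * g = g * diagonal lam := by
    simp only [g, ← mul_assoc, hMV]
    rw [mul_assoc, mul_assoc, diagonal_mul_diagonal, diagonal_mul_diagonal]
    simp only [mul_comm]
  refine ⟨g, hg, ?_⟩
  calc M = M * (g * gᵀ) := by rw [mul_eq_one_comm.mp hg, mul_one]
    _ = g * diagonal lam * gᵀ := by rw [← mul_assoc, hMg]

theorem exists_roots_charpoly_eq_map [IsAlgClosed K] (M : Matrix ι ι K) :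
    ∃ lam : ι → K, M.charpoly.roots = Finset.univ.val.map lam := by
  obtain ⟨lam, hlam⟩ := M.charpoly.roots.exists_univ_val_map_eq (ι := ι) <| by
    rw [Polynomial.splits_iff_card_roots.mp (IsAlgClosed.splits _), charpoly_natDegree_eq_dim]
  exact ⟨lam, hlam.symm⟩

theorem exists_det_eq_one_eq_conj_diagonal [IsAlgClosed K] {M : Matrix ι ι K} (hM : Mᵀ = M)
    (hroots : M.charpoly.roots.Nodup) :
    ∃ (g : Matrix ι ι K) (lam : ι → K), gᵀ * g = 1 ∧ g.det = 1 ∧ M = g * diagonal lam * gᵀ := by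
  obtain ⟨lam, hlam⟩ := exists_roots_charpoly_eq_map M
  have hinj : Function.Injective lam := fun i j h =>
    Multiset.inj_on_of_nodup_map (hlam ▸ hroots) i (Finset.mem_univ _) j (Finset.mem_univ _) h
  have hv : ∀ i, ∃ v, v ≠ 0 ∧ M *ᵥ v = lam i • v := by
    intro i
    have hroot : M.charpoly.IsRoot (lam i) :=
      Polynomial.isRoot_of_mem_roots (hlam ▸ Multiset.mem_map_of_mem lam (Finset.mem_univ i))
    rw [Polynomial.IsRoot.def, eval_charpoly] at hroot
    obtain ⟨v, hv0, hv⟩ := exists_mulVec_eq_zero_iff.mpr hroot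
    refine ⟨v, hv0, ?_⟩
    rw [sub_mulVec, sub_eq_zero] at hv
    simpa [eq_comm] using hv
  choose v hv0 hv using hv
  obtain ⟨g₀, hg₀, hconj₀⟩ := exists_orthogonal_eq_conj_diagonal_of_eigenvectors hM hinj hv0 hv
  obtain ⟨g, hg, hdet, hconj⟩ := exists_det_eq_one_conj_diagonal_eq hg₀
  exact ⟨g, lam, hg, hdet, by rw [hconj, hconj₀]⟩

end Matrices

section Density

variable {ι R : Type*} [CommSemiring R]

variable (ι R) in
noncomputable def genericSymm : Matrix ι ι (MvPolynomial (Sym2 ι) R) :=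
  of fun i j => X s(i, j)

theorem transpose_genericSymm_map_eval (x : Sym2 ι → R) :
    ((genericSymm ι R).map (eval x))ᵀ = (genericSymm ι R).map (eval x) := by
  ext i j
  simp [genericSymm, Sym2.eq_swap]

theorem exists_genericSymm_map_eval_eq {M : Matrix ι ι R} (hM : Mᵀ = M) :
    ∃ x : Sym2 ι → R, (genericSymm ι R).map (eval x) = M :=
  ⟨Sym2.lift ⟨M, fun i j => by rw [← transpose_apply M j i, hM]⟩, by ext i j; simp [genericSymm]⟩

variable {K : Type*} [Fintype ι] [Field K]

theorem prod_offDiag_sub_ne_zero_iff (lam : ι → K) :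
    ∏ p ∈ Finset.univ.offDiag, (lam p.1 - lam p.2) ≠ 0 ↔ Function.Injective lam := by
  simp only [Finset.prod_ne_zero_iff, Finset.mem_offDiag, Finset.mem_univ, true_and, sub_ne_zero,
    Function.Injective]
  exact ⟨fun h a b hab => by_contra fun hne => h (a, b) hne hab, fun h p hp => hp ∘ @h _ _⟩

variable [DecidableEq ι]

theorem exists_eval_eq_prod_offDiag_sub {τ : Type*} (N : Matrix ι ι (MvPolynomial τ K)) :
    ∃ D : MvPolynomial τ K, ∀ (x : τ → K) (lam : ι → K),
      (N.map (eval x)).charpoly.roots = Finset.univ.val.map lam →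
      eval x D = ∏ p ∈ Finset.univ.offDiag, (lam p.1 - lam p.2) := by
  set V : MvPolynomial ι K := ∏ p ∈ Finset.univ.offDiag, (X p.1 - X p.2)
  have hV : V.IsSymmetric := by
    intro e
    simp only [V, map_prod, map_sub, rename_X]
    exact Finset.prod_equiv (e.prodCongr e) (by simp [e.injective.ne_iff]) fun _ _ => rfl
  obtain ⟨Qe, hQe⟩ := esymmAlgHom_surjective K le_rfl ⟨V, hV⟩
  have hQe' : aeval (fun i : Fin (Fintype.card ι) => esymm ι K (i + 1)) Qe = V := by
    rw [← esymmAlgHom_apply, hQe]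
  refine ⟨aeval (fun i : Fin (Fintype.card ι) =>
    (-1) ^ (i + 1 : ℕ) * N.charpoly.coeff (Fintype.card ι - (i + 1))) Qe, fun x lam hlam => ?_⟩
  -- Vieta's formulas
  have hcoeff : ∀ i : Fin (Fintype.card ι),
      eval x ((-1) ^ (i + 1 : ℕ) * N.charpoly.coeff (Fintype.card ι - (i + 1)))
        = eval lam (esymm ι K (i + 1)) := by
    intro i
    set χ := (N.map (eval x)).charpoly
    have hdeg : χ.natDegree = Fintype.card ι := charpoly_natDegree_eq_dim _
    have hcard : Multiset.card χ.roots = χ.natDegree := by rw [hlam, hdeg]; simp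
    rw [map_mul, map_pow, map_neg, map_one, ← Polynomial.coeff_map, ← charpoly_map,
      Polynomial.coeff_eq_esymm_roots_of_card hcard (by omega), (charpoly_monic _).leadingCoeff,
      hdeg, Nat.sub_sub_self (by omega), hlam, ← aeval_esymm_eq_multiset_esymm ι K, one_mul,
      ← mul_assoc, ← pow_add, ← two_mul, pow_mul, neg_one_sq, one_pow, one_mul]
    rfl
  rw [eval_aeval, funext hcoeff, ← eval_aeval, hQe']
  simp [V]

theorem eval_eq_zero_of_forall_roots_nodup [IsAlgClosed K] (F : MvPolynomial (ι × ι) K)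
    (hF : ∀ M : Matrix ι ι K, Mᵀ = M → M.charpoly.roots.Nodup → eval (fun p => M p.1 p.2) F = 0)
    {M : Matrix ι ι K} (hM : Mᵀ = M) : eval (fun p => M p.1 p.2) F = 0 := by
  set N := genericSymm ι K
  set G : MvPolynomial (Sym2 ι) K := aeval (fun p : ι × ι => N p.1 p.2) F
  have hG : ∀ x, eval x G = eval (fun p => N.map (eval x) p.1 p.2) F := fun x => eval_aeval _ _ _
  obtain ⟨D, hD⟩ := exists_eval_eq_prod_offDiag_sub N
  have hD0 : D ≠ 0 := by
    intro h0
    let d : ι ↪ K := (Fintype.equivFin ι).toEmbedding.trans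
      (Fin.valEmbedding.trans (Infinite.natEmbedding K))
    obtain ⟨x, hx⟩ := exists_genericSymm_map_eval_eq (diagonal_transpose d)
    have hroots : (N.map (eval x)).charpoly.roots = Finset.univ.val.map d := by
      rw [hx, charpoly_diagonal, Polynomial.roots_prod _ _ (by
        simp [Finset.prod_ne_zero_iff, Polynomial.X_sub_C_ne_zero])]
      simp
    have h := hD x d hroots
    rw [h0, map_zero, eq_comm] at h
    exact (prod_offDiag_sub_ne_zero_iff d).mpr d.injective h
  have hGD : G * D = 0 := MvPolynomial.funext fun x => by
    rw [map_mul, map_zero]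
    obtain ⟨lam, hlam⟩ := exists_roots_charpoly_eq_map (N.map (eval x))
    by_cases hx : eval x D = 0
    · rw [hx, mul_zero]
    rw [hD x lam hlam] at hx
    have hinj := (prod_offDiag_sub_ne_zero_iff lam).mp hx
    rw [hG, hF _ (transpose_genericSymm_map_eval x) (hlam ▸ Finset.univ.nodup.map hinj), zero_mul]
  obtain ⟨x, rfl⟩ := exists_genericSymm_map_eval_eq hM
  rw [← hG, (mul_eq_zero.mp hGD).resolve_right hD0, map_zero]

end Density

section Invariants

variable {ι K : Type*} [Fintype ι] [DecidableEq ι] [Field K] [CharZero K]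

theorem exists_eval_psum_eq_of_perm_invariant {n : ℕ} (hn : Fintype.card ι ≤ n)
    {P : Matrix ι ι K → K} {q : MvPolynomial (ι × ι) K}
    (hq : ∀ X : Matrix ι ι K, P X = eval (fun p => X p.1 p.2) q)
    (hperm : ∀ (d : ι → K) (σ : Equiv.Perm ι), P (diagonal (d ∘ σ)) = P (diagonal d)) :
    ∃ Q : MvPolynomial (Fin n) K,
      ∀ d : ι → K, P (diagonal d) = eval (fun i : Fin n => ∑ j, d j ^ (i + 1 : ℕ)) Q := by
  set p₀ : MvPolynomial ι K := aeval (fun p : ι × ι => diagonal X p.1 p.2) q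
  have hp₀ : ∀ d, eval d p₀ = P (diagonal d) := fun d => by
    rw [eval_aeval, hq]
    refine congrArg (fun x => eval x q) (funext fun p => ?_)
    rw [← map_apply (f := eval d), diagonal_map (map_zero _)]
    simp
  have hsymm : p₀.IsSymmetric := fun σ => MvPolynomial.funext fun d => by
    rw [eval_rename, hp₀, hp₀, hperm]
  obtain ⟨Q, hQ⟩ := hsymm.exists_aeval_psum_eq hn
  exact ⟨Q, fun d => by rw [← hp₀, ← hQ, eval_aeval]; simp [psum]⟩

theorem exists_eval_trace_pow_eq_of_invariant [IsAlgClosed K] {n : ℕ}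
    (hn : Fintype.card ι ≤ n) (P : Matrix ι ι K → K)
    (hpoly : ∃ q : MvPolynomial (ι × ι) K, ∀ X : Matrix ι ι K, P X = eval (fun p => X p.1 p.2) q)
    (hinv : ∀ X g : Matrix ι ι K, Xᵀ = X → gᵀ * g = 1 → g.det = 1 → P (g * X * gᵀ) = P X) :
    ∃ Q : MvPolynomial (Fin n) K,
      ∀ X : Matrix ι ι K, Xᵀ = X → P X = eval (fun i : Fin n => (X ^ (i + 1 : ℕ)).trace) Q := by
  obtain ⟨q, hq⟩ := hpoly
  obtain ⟨Q, hQ⟩ := exists_eval_psum_eq_of_perm_invariant hn hq fun d σ => by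
    obtain ⟨g, hg, hdet, hconj⟩ := exists_det_eq_one_conj_diagonal_eq_comp (K := K) σ
    rw [← hconj, hinv _ _ (diagonal_transpose d) hg hdet]
  have hregular : ∀ M : Matrix ι ι K, Mᵀ = M → M.charpoly.roots.Nodup →
      P M = eval (fun i : Fin n => (M ^ (i + 1 : ℕ)).trace) Q := by
    intro M hM hnodup
    obtain ⟨g, lam, hg, hdet, rfl⟩ := exists_det_eq_one_eq_conj_diagonal hM hnodup
    simp only [hinv _ _ (diagonal_transpose lam) hg hdet, hQ, trace_pow_mul_mul_transpose hg,
      diagonal_pow, trace_diagonal, Pi.pow_apply]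
  set Xgen : Matrix ι ι (MvPolynomial (ι × ι) K) := of fun i j => X (i, j)
  have hXgen : ∀ M : Matrix ι ι K, Xgen.map (eval fun p => M p.1 p.2) = M := fun M => by
    ext i j; simp [Xgen]
  set F := q - aeval (fun i : Fin n => (Xgen ^ (i + 1 : ℕ)).trace) Q
  have hF : ∀ M : Matrix ι ι K, eval (fun p => M p.1 p.2) F
      = P M - eval (fun i : Fin n => (M ^ (i + 1 : ℕ)).trace) Q := fun M => by
    simp only [F, map_sub, eval_aeval, eval_trace_pow, hXgen, hq]
  refine ⟨Q, fun X hX => sub_eq_zero.mp ?_⟩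
  rw [← hF]
  exact eval_eq_zero_of_forall_roots_nodup F
    (fun M hM hnodup => by rw [hF, hregular M hM hnodup, sub_self]) hX

end Invariants

end SymmetricMatrixInvariants

/-- If `P : M₄(ℂ) → ℂ` is a polynomial function of the 16 matrix entries satisfying
`P(gXgᵀ) = P(X)` for every symmetric `X` and every `g ∈ SO₄(ℂ)`, then on symmetric matrices
`P` is a polynomial in `tr X`, `tr X²`, `tr X³`, `tr X⁴`. -/
theorem statement10 (P : Matrix (Fin 4) (Fin 4) ℂ → ℂ)
    (hpoly : ∃ q : MvPolynomial (Fin 4 × Fin 4) ℂ,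
      ∀ X : Matrix (Fin 4) (Fin 4) ℂ, P X = MvPolynomial.eval (fun p => X p.1 p.2) q)
    (hinv : ∀ (X g : Matrix (Fin 4) (Fin 4) ℂ), Xᵀ = X →
      gᵀ * g = 1 → g.det = 1 → P (g * X * gᵀ) = P X) :
    ∃ Q : MvPolynomial (Fin 4) ℂ, ∀ X : Matrix (Fin 4) (Fin 4) ℂ, Xᵀ = X →
      P X = MvPolynomial.eval
        ![X.trace, (X ^ 2).trace, (X ^ 3).trace, (X ^ 4).trace] Q := by
  obtain ⟨Q, hQ⟩ := SymmetricMatrixInvariants.exists_eval_trace_pow_eq_of_invariant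
    (Fintype.card_fin 4).le P hpoly hinv
  refine ⟨Q, fun X hX => ?_⟩
  rw [hQ X hX]
  refine congrArg (fun x => MvPolynomial.eval x Q) (funext fun i => ?_)
  fin_cases i <;> simp
end
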